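/- Let G = SN(n,𝒜) be a SetNim game and suppose C ⊆ {1,...,n} satisfies: for every A ∈ 𝒜, either C ⊆ A or C ∩ A = ∅. Define the merge-reduced game G̃ on vertex set ({1,...,n} − C) ∪ {v*} with move sets Ã = A if A ∩ C = ∅ and Ã = (A − C) ∪ {v*} otherwise; for a position p of G define p̃ by p̃_{v*} = Σ_{i∈C} p_i and p̃_i = p_i for i ∉ C. Then the Sprague–Grundy values satisfy g(p) = g(p̃). In particular, p is a P-position of G if and only if p̃ is a P-position of G̃. -/

import Mathlib

/-- A legal move in SetNim: at least one stack strictly decreases, all changed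
stacks lie in some allowed move set, stacks weakly decrease. -/
def Move {V : Type} (A : Set (Set V)) (p q : V → ℕ) : Prop :=
  q ≠ p ∧ (∀ i, q i ≤ p i) ∧ ∃ a ∈ A, ∀ i, q i ≠ p i → i ∈ a

/-- P-positions: positions all of whose options are N-positions. -/
def PPos {V : Type} [Fintype V] (A : Set (Set V)) (p : V → ℕ) : Prop :=
  ∀ q, Move A p q → ¬ PPos A q
termination_by Finset.univ.sum p
decreasing_by
  rename_i hq
  obtain ⟨hne, hle, -⟩ := hq
  refine Finset.sum_lt_sum (fun i _ => hle i) ?_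
  obtain ⟨i, hi⟩ := Function.ne_iff.mp hne
  exact ⟨i, Finset.mem_univ i, lt_of_le_of_ne (hle i) hi⟩

/-- The Sprague–Grundy value: the mex of the Grundy values of the options. -/
noncomputable def grundy {V : Type} [Fintype V] (A : Set (Set V)) (p : V → ℕ) : ℕ :=
  sInf {m : ℕ | ∀ q, Move A p q → grundy A q ≠ m}
termination_by Finset.univ.sum p
decreasing_by
  rename_i hq
  obtain ⟨hne, hle, -⟩ := hq
  refine Finset.sum_lt_sum (fun i _ => hle i) ?_
  obtain ⟨i, hi⟩ := Function.ne_iff.mp hne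
  exact ⟨i, Finset.mem_univ i, lt_of_le_of_ne (hle i) hi⟩

/-- The vertex set of the merge-reduced game: vertices outside C, plus the new
merged vertex v* (the Sum.inr vertex). -/
abbrev MVert (n : ℕ) (C : Finset (Fin n)) : Type := {i : Fin n // i ∉ C} ⊕ Unit

/-- The merge-reduced move set: Ã = A if A ∩ C = ∅, and Ã = (A − C) ∪ {v*}
otherwise. -/
def mergeSet {n : ℕ} (C : Finset (Fin n)) (a : Set (Fin n)) : Set (MVert n C) :=
  {w | Sum.elim (fun i => i.1 ∈ a) (fun _ => ((↑C : Set (Fin n)) ∩ a).Nonempty) w}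

/-- The collection of merged move sets. -/
def mergeSets {n : ℕ} (C : Finset (Fin n)) (A : Set (Set (Fin n))) :
    Set (Set (MVert n C)) := mergeSet C '' A

/-- The merged position: p̃ᵥ* = Σ_{i ∈ C} pᵢ and p̃ᵢ = pᵢ for i ∉ C. -/
def mergePos {n : ℕ} (C : Finset (Fin n)) (p : Fin n → ℕ) : MVert n C → ℕ :=
  Sum.elim (fun i => p i.1) (fun _ => ∑ i ∈ C, p i)

/-! The merge map p ↦ p̃ sends moves to moves, and every move from p̃ is the image of a move
from p: a decrease of the merged stack can be spread back over the stacks of C, and it is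
legal because a move set touching C contains all of C. Grundy values are invariant under any
such map of games, by induction on the total number of tokens, and the P-positions are
exactly the positions of Grundy value 0. -/

section Game

variable {V W : Type} [Fintype V] [Fintype W] {A : Set (Set V)} {B : Set (Set W)}

theorem Move.sum_lt {p q : V → ℕ} (hq : Move A p q) : ∑ i, q i < ∑ i, p i := by
  obtain ⟨hne, hle, -⟩ := hq
  obtain ⟨i, hi⟩ := Function.ne_iff.mp hne
  exact Finset.sum_lt_sum (fun i _ => hle i) ⟨i, Finset.mem_univ i, (hle i).lt_of_ne hi⟩

theorem Move.induction (A : Set (Set V)) {motive : (V → ℕ) → Prop}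
    (step : ∀ p, (∀ q, Move A p q → motive q) → motive p) (p : V → ℕ) : motive p :=
  (measure fun p : V → ℕ => ∑ i, p i).wf.induction p fun p ih =>
    step p fun _ hq => ih _ hq.sum_lt

theorem finite_setOf_move (p : V → ℕ) : {q | Move A p q}.Finite := by
  classical
  exact (Set.finite_Iic p).subset fun _ hq => hq.2.1

theorem nonempty_setOf_forall_move_grundy_ne (p : V → ℕ) :
    {m | ∀ q, Move A p q → grundy A q ≠ m}.Nonempty := by
  obtain ⟨m, hm⟩ := ((finite_setOf_move p).image (grundy A)).infinite_compl.nonempty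
  exact ⟨m, fun q hq hqm => hm ⟨q, hq, hqm⟩⟩

theorem grundy_eq_zero_iff {p : V → ℕ} :
    grundy A p = 0 ↔ ∀ q, Move A p q → grundy A q ≠ 0 := by
  rw [grundy, Nat.sInf_eq_zero, or_iff_left (nonempty_setOf_forall_move_grundy_ne p).ne_empty]
  rfl

theorem pPos_iff_grundy_eq_zero (p : V → ℕ) : PPos A p ↔ grundy A p = 0 := by
  induction p using Move.induction A with
  | step p ih =>
    rw [PPos, grundy_eq_zero_iff]
    exact forall₂_congr fun q hq => not_congr (ih q hq)

theorem grundy_eq_of_move_map_lift (f : (V → ℕ) → W → ℕ)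
    (map : ∀ p q, Move A p q → Move B (f p) (f q))
    (lift : ∀ p q', Move B (f p) q' → ∃ q, Move A p q ∧ f q = q') (p : V → ℕ) :
    grundy A p = grundy B (f p) := by
  induction p using Move.induction A with
  | step p ih =>
    rw [grundy, grundy]
    congr 1
    ext m
    constructor
    · intro h q' hq'
      obtain ⟨q, hq, rfl⟩ := lift p q' hq'
      rw [← ih q hq]
      exact h q hq
    · intro h q hq
      rw [ih q hq]
      exact h _ (map p q hq)

end Game

theorem Finset.exists_le_of_le_sum {ι : Type*} [DecidableEq ι] (s : Finset ι) (p : ι → ℕ)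
    {m : ℕ} (hm : m ≤ ∑ i ∈ s, p i) :
    ∃ q ≤ p, (∀ i ∉ s, q i = p i) ∧ ∑ i ∈ s, q i = m := by
  induction s using Finset.induction generalizing m with
  | empty => exact ⟨p, le_rfl, fun _ _ => rfl, by simpa using hm.antisymm' (by simp)⟩
  | insert i s hi ih =>
    rw [Finset.sum_insert hi] at hm
    obtain ⟨r, hrp, hr_out, hr⟩ := ih (m := m - min m (p i)) (by omega)
    refine ⟨Function.update r i (min m (p i)), ?_, ?_, ?_⟩
    · intro j
      rcases eq_or_ne j i with rfl | hj
      · simp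
      · simpa [hj] using hrp j
    · intro j hj
      rw [Finset.mem_insert, not_or] at hj
      rw [Function.update_of_ne hj.1, hr_out j hj.2]
    · rw [Finset.sum_insert hi, Function.update_self, Finset.sum_update_of_notMem hi, hr]
      omega

section Merge

variable {n : ℕ} {A : Set (Set (Fin n))} {C : Finset (Fin n)} {p q : Fin n → ℕ}

theorem mergePos_mono (hle : q ≤ p) : mergePos C q ≤ mergePos C p
  | .inl i => hle i
  | .inr _ => Finset.sum_le_sum fun i _ => hle i

theorem mergePos_inr_eq_iff (hle : q ≤ p) :
    mergePos C q (.inr ()) = mergePos C p (.inr ()) ↔ ∀ i ∈ C, q i = p i :=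
  Finset.sum_eq_sum_iff_of_le fun i _ => hle i

theorem Move.mergePos (hq : Move A p q) :
    Move (mergeSets C A) (mergePos C p) (mergePos C q) := by
  obtain ⟨hne, hle, a, ha, hchg⟩ := hq
  have hle : q ≤ p := hle
  refine ⟨?_, mergePos_mono hle, mergeSet C a, ⟨a, ha, rfl⟩, ?_⟩
  · refine fun h => hne (funext fun i => ?_)
    by_cases hi : i ∈ C
    · exact (mergePos_inr_eq_iff hle).1 (congrFun h (.inr ())) i hi
    · exact congrFun h (.inl ⟨i, hi⟩)
  · rintro (i | u) hi
    · exact hchg i hi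
    · obtain ⟨i, hiC, hi⟩ : ∃ i ∈ C, q i ≠ p i := by
        simpa using mt (mergePos_inr_eq_iff hle).2 hi
      exact ⟨i, hiC, hchg i hi⟩

theorem exists_move_mergePos_eq
    (hC : ∀ a ∈ A, (↑C : Set (Fin n)) ⊆ a ∨ (↑C : Set (Fin n)) ∩ a = ∅)
    {q' : MVert n C → ℕ} (hq' : Move (mergeSets C A) (mergePos C p) q') :
    ∃ q, Move A p q ∧ mergePos C q = q' := by
  obtain ⟨hne, hle, _, ⟨a, ha, rfl⟩, hchg⟩ := hq'
  obtain ⟨r, hrp, -, hr⟩ := C.exists_le_of_le_sum p (hle (.inr ()))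
  set q : Fin n → ℕ := fun i => if h : i ∈ C then r i else q' (.inl ⟨i, h⟩)
  have hq : mergePos C q = q' := by
    funext w
    rcases w with ⟨i, hi⟩ | ⟨⟩
    · simp [q, mergePos, hi]
    · simp only [q, mergePos, Sum.elim_inr, ← hr]
      exact Finset.sum_congr rfl fun i hi => dif_pos hi
  have hqp : q ≤ p := by
    intro i
    by_cases hi : i ∈ C
    · simpa [q, hi] using hrp i
    · simpa [q, hi, mergePos] using hle (.inl ⟨i, hi⟩)
  refine ⟨q, ⟨fun h => hne (by rw [← hq, h]), hqp, a, ha, fun i hi => ?_⟩, hq⟩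
  by_cases hiC : i ∈ C
  · have hCa : ((↑C : Set (Fin n)) ∩ a).Nonempty := hchg (.inr ()) <| by
      rw [← hq]
      exact mt (mergePos_inr_eq_iff hqp).1 fun h => hi (h i hiC)
    rcases hC a ha with hsub | hdisj
    · exact hsub hiC
    · exact absurd hdisj hCa.ne_empty
  · exact hchg (.inl ⟨i, hiC⟩) (by rw [← hq]; simpa [q, hiC, mergePos] using hi)

end Merge

/-- if every move set either contains C or is disjoint from C, the
merge-reduced game has the same Grundy values; in particular p is a P-position
iff its merge reduction is. -/
theorem merge_reduction {n : ℕ} (A : Set (Set (Fin n))) (C : Finset (Fin n))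
    (hC : ∀ a ∈ A, (↑C : Set (Fin n)) ⊆ a ∨ (↑C : Set (Fin n)) ∩ a = ∅)
    (p : Fin n → ℕ) :
    grundy A p = grundy (mergeSets C A) (mergePos C p) ∧
      (PPos A p ↔ PPos (mergeSets C A) (mergePos C p)) := by
  have hgrundy : grundy A p = grundy (mergeSets C A) (mergePos C p) :=
    grundy_eq_of_move_map_lift (mergePos C) (fun _ _ => Move.mergePos)
      (fun _ _ => exists_move_mergePos_eq hC) p
  exact ⟨hgrundy, by rw [pPos_iff_grundy_eq_zero, pPos_iff_grundy_eq_zero, hgrundy]⟩
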